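/- arXiv:1511.03769 — 4 statements merged into one kernel-verified Lean document; each statement's English description precedes it below -/
import Mathlib

section
/- Under the hypotheses that f ∈ L^∞ ∩ L^1(Ω×ℝ^d) with f ≥ 0, ∫ f = 1, ∇_v f ∈ W^{1,p}_{loc} for all 1 ≤ p ≤ ∞ and Λ := sup_p M_p/p < ∞, one has for N ≥ 2 the large-k bound: Σ_{k=⌊N/3⌋+1}^{∞} (1/(2k)!) ∫_{(Ω×ℝ^d)^N} |R_N|^{2k} f̄_N dZ ≤ Σ_{k=⌊N/3⌋+1}^{∞} ( 5e² ‖K‖_{L^∞} Λ )^{2k}. -/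
open MeasureTheory
open scoped InnerProductSpace ENNReal

/-- The domain `Ω = ℝ^d` for positions (and `ℝ^d` for velocities). -/
abbrev Edim (d : ℕ) := EuclideanSpace ℝ (Fin d)

/-- The one-particle phase space `Ω × ℝ^d`. -/
abbrev Phase (d : ℕ) := Edim d × Edim d

/-- `∇_v log f`, the gradient in the velocity variable of `log f`. -/
noncomputable def gradLogV {d : ℕ} (f : Phase d → ℝ) (z : Phase d) : Edim d :=
  gradient (fun w => Real.log (f (z.1, w))) z.2

/-- `∇_v f`, the gradient in the velocity variable of `f`. -/
noncomputable def gradV {d : ℕ} (f : Phase d → ℝ) (z : Phase d) : Edim d :=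
  gradient (fun w => f (z.1, w)) z.2

/-- The convolution `K ⋆ ρ (x) = ∫ K(x−y) ρ(y) dy` where `ρ(y) = ∫ f(y,w) dw` is the
macroscopic density of `f`. -/
noncomputable def Kconv {d : ℕ} (K : Edim d → Edim d) (f : Phase d → ℝ) (x : Edim d) :
    Edim d :=
  ∫ z : Phase d, f z • K (x - z.1)

/-- `R_N(Z) = (1/N) Σ_{i,j} ∇_{v_i} log f(x_i,v_i) · (K(x_i−x_j) − K⋆ρ(x_i))`. -/
noncomputable def RN {d : ℕ} (N : ℕ) (K : Edim d → Edim d) (f : Phase d → ℝ)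
    (Z : Fin N → Phase d) : ℝ :=
  (N : ℝ)⁻¹ * ∑ i, ∑ j,
    ⟪gradLogV f (Z i), K ((Z i).1 - (Z j).1) - Kconv K f ((Z i).1)⟫_ℝ

/-- The tensor product `f̄_N(Z) = ∏_{i=1}^N f(x_i, v_i)`. -/
noncomputable def fbar {d : ℕ} (N : ℕ) (f : Phase d → ℝ) (Z : Fin N → Phase d) : ℝ :=
  ∏ i, f (Z i)

/-!
Since `|K| ≤ CK` and `|K ⋆ ρ| ≤ CK`, one has `|R_N| ≤ 2 CK S` with `S = Σᵢ |∇_v log f(zᵢ)|`, and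
`x ^ n ≤ n! t⁻ⁿ e^{t x}` turns the `2k`-th moment into an exponential moment of `S`, which
factorizes over the particles:
`(2k)!⁻¹ ∫ |R_N|^{2k} f̄_N ≤ (2 CK / t)^{2k} (∫ e^{t |∇_v log f|} f)^N`.
Expanding the exponential and using `M_q ≤ Λ q` together with `q^q ≤ e^q q!`, the one-particle
factor is at most `Σ_q (t Λ e)^q ≤ 2` for `t = (2 e Λ)⁻¹`. Finally `2^N ≤ 8^k` because
`k > N / 3`, and `(4 e)² · 8 ≤ (5 e²)²`. When `Λ ≤ 0` the bound holds for every `t > 0`, and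
letting `t → ∞` shows the moments vanish.
-/

open Real

lemma Real.pow_le_factorial_mul_exp {x : ℝ} (hx : 0 ≤ x) (n : ℕ) :
    x ^ n ≤ n.factorial * exp x := by
  have := Real.pow_div_factorial_le_exp x hx n
  rwa [div_le_iff₀ (by positivity), mul_comm] at this

lemma Real.pow_mul_natCast_pow_div_factorial_le (x : ℝ) (hx : 0 ≤ x) (q : ℕ) :
    x ^ q * (q : ℝ) ^ q / q.factorial ≤ (x * exp 1) ^ q := by
  have h := Real.pow_div_factorial_le_exp q (Nat.cast_nonneg q) q
  rw [← exp_one_pow] at h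
  rw [mul_div_assoc, mul_pow]
  gcongr

lemma Real.exp_eq_tsum_pow_div_factorial (x : ℝ) : exp x = ∑' n : ℕ, x ^ n / n.factorial := by
  rw [exp_eq_exp_ℝ, (NormedSpace.expSeries_div_hasSum_exp x).tsum_eq]

namespace MeasureTheory

variable {α : Type*} [MeasurableSpace α]

lemma lintegral_pi_prod_le (μ : Measure α) [SigmaFinite μ] (G : α → ℝ≥0∞) (hG : ∀ x, G x ≠ ∞)
    (n : ℕ) : ∫⁻ Z, ∏ i, G (Z i) ∂Measure.pi (fun _ : Fin n => μ) ≤ (∫⁻ x, G x ∂μ) ^ n := by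
  induction n with
  | zero => simp
  | succ n ih =>
    rcases eq_or_ne (∫⁻ x, G x ∂μ) ∞ with hJ | hJ
    · simp [hJ]
    have split : ∫⁻ Z, ∏ i, G (Z i) ∂Measure.pi (fun _ : Fin (n + 1) => μ)
        = ∫⁻ p, G p.1 * ∏ i, G (p.2 i) ∂μ.prod (Measure.pi fun _ : Fin n => μ) := by
      rw [← ((measurePreserving_piFinSuccAbove (fun _ : Fin (n + 1) => μ) 0).symm
        ).lintegral_comp_emb (MeasurableEquiv.measurableEmbedding _)]
      congr 1 with p
      simp [Fin.prod_univ_succ]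
    calc ∫⁻ Z, ∏ i, G (Z i) ∂Measure.pi (fun _ : Fin (n + 1) => μ)
        ≤ ∫⁻ x, ∫⁻ Y, G x * ∏ i, G (Y i) ∂Measure.pi (fun _ : Fin n => μ) ∂μ :=
          split ▸ lintegral_prod_le _
      _ = ∫⁻ x, G x * ∫⁻ Y, ∏ i, G (Y i) ∂Measure.pi (fun _ : Fin n => μ) ∂μ := by
          congr 1 with x
          exact lintegral_const_mul' _ _ (hG x)
      _ ≤ ∫⁻ x, G x * (∫⁻ x, G x ∂μ) ^ n ∂μ := by gcongr
      _ = (∫⁻ x, G x ∂μ) ^ (n + 1) := by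
          rw [lintegral_mul_const' _ _ (ENNReal.pow_ne_top hJ), pow_succ']

variable {μ : Measure α} {w : α → ℝ}

/-- The lower Lebesgue integral of a non-measurable function is not countably subadditive, so
before expanding `exp` into its series the exponent is replaced by a measurable minorant. -/
lemma exists_aemeasurable_le_lintegral_exp_mul_le (hw : AEMeasurable w μ) (hw0 : ∀ z, 0 ≤ w z)
    (a : α → ℝ) (ha0 : ∀ z, 0 ≤ a z) :
    ∃ b : α → ℝ, AEMeasurable b μ ∧ (∀ z, 0 ≤ b z) ∧ (∀ z, b z ≤ a z) ∧
      ∫⁻ z, ENNReal.ofReal (exp (a z) * w z) ∂μ ≤ ∫⁻ z, ENNReal.ofReal (exp (b z) * w z) ∂μ := by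
  obtain ⟨g, hg, hga, hg_eq⟩ :=
    exists_measurable_le_lintegral_eq μ fun z => ENNReal.ofReal (exp (a z) * w z)
  set r : α → ℝ := fun z => (g z).toReal / w z
  have hr0 : ∀ z, 0 ≤ r z := fun z => div_nonneg ENNReal.toReal_nonneg (hw0 z)
  have hgr : ∀ z, (g z).toReal ≤ exp (a z) * w z := fun z =>
    ENNReal.toReal_le_of_le_ofReal (mul_nonneg (exp_pos _).le (hw0 z)) (hga z)
  have hg_le_rw : ∀ z, (g z).toReal ≤ r z * w z := by
    intro z
    rcases eq_or_ne (w z) 0 with h | h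
    · simpa [h] using hgr z
    · exact (div_mul_cancel₀ _ h).ge
  have hra : ∀ z, r z ≤ exp (a z) := by
    intro z
    rcases (hw0 z).eq_or_lt with h | h
    · simp [r, ← h, (exp_pos _).le]
    · exact (div_le_iff₀ h).2 (hgr z)
  refine ⟨fun z => max 0 (log (r z)), ?_, fun z => le_max_left _ _, fun z => ?_, ?_⟩
  · exact aemeasurable_const.max
      (measurable_log.comp_aemeasurable (hg.ennreal_toReal.aemeasurable.div hw))
  · refine max_le (ha0 z) ?_
    rcases (hr0 z).eq_or_lt with h | h
    · simp [← h, ha0 z]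
    · exact (log_le_iff_le_exp h).2 (hra z)
  · rw [hg_eq]
    refine lintegral_mono fun z => ?_
    rw [← ENNReal.ofReal_toReal (ne_top_of_le_ne_top ENNReal.ofReal_ne_top (hga z))]
    refine ENNReal.ofReal_le_ofReal ((hg_le_rw z).trans ?_)
    gcongr
    · exact hw0 z
    · exact (le_exp_log _).trans (exp_le_exp.2 (le_max_right _ _))

lemma lintegral_exp_mul_eq_tsum (hw : AEMeasurable w μ) (hw0 : ∀ z, 0 ≤ w z) {b : α → ℝ}
    (hb : AEMeasurable b μ) (hb0 : ∀ z, 0 ≤ b z) :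
    ∫⁻ z, ENNReal.ofReal (exp (b z) * w z) ∂μ
      = ∑' q : ℕ, ENNReal.ofReal (q.factorial : ℝ)⁻¹ * ∫⁻ z, ENNReal.ofReal (b z ^ q * w z) ∂μ := by
  have hterm : ∀ q : ℕ, ∀ z, 0 ≤ b z ^ q / q.factorial * w z := fun q z => by
    have := hb0 z; have := hw0 z; positivity
  calc ∫⁻ z, ENNReal.ofReal (exp (b z) * w z) ∂μ
      = ∫⁻ z, ∑' q : ℕ, ENNReal.ofReal (b z ^ q / q.factorial * w z) ∂μ := by
        congr 1 with z
        rw [exp_eq_tsum_pow_div_factorial, ← tsum_mul_right, ENNReal.ofReal_tsum_of_nonneg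
          (fun q => hterm q z) ((summable_pow_div_factorial (b z)).mul_right (w z))]
    _ = ∑' q : ℕ, ∫⁻ z, ENNReal.ofReal (b z ^ q / q.factorial * w z) ∂μ :=
        lintegral_tsum fun q => (((hb.pow_const q).div_const _).mul hw).ennreal_ofReal
    _ = _ := by
        congr 1 with q
        rw [← lintegral_const_mul' _ _ ENNReal.ofReal_ne_top]
        congr 1 with z
        rw [← ENNReal.ofReal_mul (by positivity)]
        ring_nf

lemma lintegral_exp_mul_le_two (hw : AEMeasurable w μ) (hw0 : ∀ z, 0 ≤ w z) {a : α → ℝ}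
    (ha0 : ∀ z, 0 ≤ a z) {Λ : ℝ} (hΛ0 : 0 ≤ Λ)
    (hmom : ∀ q : ℕ, ∫⁻ z, ENNReal.ofReal (a z ^ q * w z) ∂μ ≤ ENNReal.ofReal ((Λ * q) ^ q))
    {t : ℝ} (ht : 0 ≤ t) (htΛ : t * Λ * exp 1 ≤ 1 / 2) :
    ∫⁻ z, ENNReal.ofReal (exp (t * a z) * w z) ∂μ ≤ 2 := by
  obtain ⟨b, hb, hb0, hba, hexp⟩ := exists_aemeasurable_le_lintegral_exp_mul_le hw hw0
    (fun z => t * a z) fun z => mul_nonneg ht (ha0 z)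
  have hρ : 0 ≤ t * Λ * exp 1 := by positivity
  have hmom_b : ∀ q : ℕ, ENNReal.ofReal (q.factorial : ℝ)⁻¹ *
      ∫⁻ z, ENNReal.ofReal (b z ^ q * w z) ∂μ ≤ ENNReal.ofReal ((t * Λ * exp 1) ^ q) := by
    intro q
    calc ENNReal.ofReal (q.factorial : ℝ)⁻¹ * ∫⁻ z, ENNReal.ofReal (b z ^ q * w z) ∂μ
        ≤ ENNReal.ofReal (q.factorial : ℝ)⁻¹ *
            (ENNReal.ofReal (t ^ q) * ∫⁻ z, ENNReal.ofReal (a z ^ q * w z) ∂μ) := by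
          rw [← lintegral_const_mul' (ENNReal.ofReal (t ^ q)) _ ENNReal.ofReal_ne_top]
          gcongr with z
          rw [← ENNReal.ofReal_mul (by positivity), ← mul_assoc, ← mul_pow]
          gcongr
          exacts [hw0 z, hb0 z, hba z]
      _ ≤ ENNReal.ofReal (q.factorial : ℝ)⁻¹ *
            (ENNReal.ofReal (t ^ q) * ENNReal.ofReal ((Λ * q) ^ q)) := by gcongr; exact hmom q
      _ = ENNReal.ofReal ((t * Λ) ^ q * (q : ℝ) ^ q / q.factorial) := by
          rw [← ENNReal.ofReal_mul (by positivity), ← ENNReal.ofReal_mul (by positivity)]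
          congr 1
          ring
      _ ≤ ENNReal.ofReal ((t * Λ * exp 1) ^ q) :=
          ENNReal.ofReal_le_ofReal (pow_mul_natCast_pow_div_factorial_le _ (by positivity) q)
  calc ∫⁻ z, ENNReal.ofReal (exp (t * a z) * w z) ∂μ
      ≤ ∫⁻ z, ENNReal.ofReal (exp (b z) * w z) ∂μ := hexp
    _ = ∑' q : ℕ, ENNReal.ofReal (q.factorial : ℝ)⁻¹ *
          ∫⁻ z, ENNReal.ofReal (b z ^ q * w z) ∂μ := lintegral_exp_mul_eq_tsum hw hw0 hb hb0
    _ ≤ ∑' q : ℕ, ENNReal.ofReal ((t * Λ * exp 1) ^ q) := ENNReal.tsum_le_tsum hmom_b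
    _ = ENNReal.ofReal (1 - t * Λ * exp 1)⁻¹ := by
        have hρ1 : t * Λ * exp 1 < 1 := by linarith
        rw [← ENNReal.ofReal_tsum_of_nonneg (fun q => by positivity)
          (summable_geometric_of_lt_one hρ hρ1), tsum_geometric_of_lt_one hρ hρ1]
    _ ≤ 2 := by
        rw [← ENNReal.ofReal_ofNat 2]
        refine ENNReal.ofReal_le_ofReal ?_
        rw [inv_le_comm₀ (by linarith) two_pos]
        linarith

lemma lintegral_pow_mul_le_of_rpow_le (hw : Integrable w μ) (hw0 : ∀ z, 0 ≤ w z)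
    (hmass : ∫ z, w z ∂μ = 1) {a : α → ℝ} {Λ : ℝ} (hΛ0 : 0 ≤ Λ)
    (h : ∀ q : ℕ, 1 ≤ q →
      (∫⁻ z, ENNReal.ofReal (a z ^ q * w z) ∂μ) ^ (1 / (q : ℝ)) ≤ ENNReal.ofReal (Λ * q))
    (q : ℕ) : ∫⁻ z, ENNReal.ofReal (a z ^ q * w z) ∂μ ≤ ENNReal.ofReal ((Λ * q) ^ q) := by
  rcases Nat.eq_zero_or_pos q with rfl | hq
  · simp [← ofReal_integral_eq_lintegral_ofReal hw (ae_of_all _ hw0), hmass]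
  · have := h q hq
    rwa [one_div, ENNReal.rpow_inv_le_iff (by positivity), ENNReal.rpow_natCast,
      ← ENNReal.ofReal_pow (by positivity)] at this

end MeasureTheory

lemma ENNReal.eq_zero_of_forall_le_ofReal_div_pow_mul {x C : ℝ≥0∞} (hC : C ≠ ∞) (c : ℝ) {n : ℕ}
    (hn : n ≠ 0) (h : ∀ t : ℝ, 0 < t → x ≤ ENNReal.ofReal ((c / t) ^ n) * C) : x = 0 := by
  have hlim : Filter.Tendsto (fun t : ℝ => ENNReal.ofReal ((c / t) ^ n) * C) Filter.atTop
      (nhds 0) := by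
    have := ((tendsto_const_nhds (x := c)).div_atTop Filter.tendsto_id).pow n
    simpa [zero_pow hn] using ENNReal.Tendsto.mul_const (ENNReal.tendsto_ofReal this) (.inr hC)
  exact nonpos_iff_eq_zero.1 <| ge_of_tendsto hlim <|
    (Filter.eventually_gt_atTop 0).mono h

lemma ofReal_four_exp_mul_pow_mul_two_pow_le (c Λ : ℝ) {k N : ℕ} (hN : N ≤ 3 * k) :
    ENNReal.ofReal ((4 * exp 1 * c * Λ) ^ (2 * k)) * 2 ^ N
      ≤ ENNReal.ofReal ((5 * exp 1 ^ 2 * c * Λ) ^ (2 * k)) := by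
  have he : (128 : ℝ) ≤ 25 * exp 1 ^ 2 := by nlinarith [exp_one_gt_d9]
  have hbase : (4 * exp 1 * c * Λ) ^ 2 * 2 ^ 3 ≤ (5 * exp 1 ^ 2 * c * Λ) ^ 2 := by
    have := mul_le_mul_of_nonneg_right he (sq_nonneg (exp 1 * c * Λ))
    linarith
  calc ENNReal.ofReal ((4 * exp 1 * c * Λ) ^ (2 * k)) * 2 ^ N
      ≤ ENNReal.ofReal ((4 * exp 1 * c * Λ) ^ (2 * k)) * 2 ^ (3 * k) := by
        gcongr
        norm_num
    _ = ENNReal.ofReal (((4 * exp 1 * c * Λ) ^ 2 * 2 ^ 3) ^ k) := by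
        rw [mul_pow (_ ^ 2), ← pow_mul, ← pow_mul,
          ENNReal.ofReal_mul ((even_two_mul k).pow_nonneg _), ENNReal.ofReal_pow zero_le_two, ENNReal.ofReal_ofNat]
    _ ≤ ENNReal.ofReal ((5 * exp 1 ^ 2 * c * Λ) ^ (2 * k)) := by
        rw [pow_mul]
        gcongr

section MeanField

variable {d : ℕ}

lemma norm_Kconv_le {K : Edim d → Edim d} {f : Phase d → ℝ} {CK : ℝ} (hK : ∀ x, ‖K x‖ ≤ CK)
    (hfpos : ∀ z, 0 ≤ f z) (hfint : Integrable f) (hfmass : ∫ z : Phase d, f z = 1)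
    (x : Edim d) : ‖Kconv K f x‖ ≤ CK :=
  calc ‖Kconv K f x‖ ≤ ∫ z : Phase d, ‖f z • K (x - z.1)‖ := norm_integral_le_integral_norm _
    _ ≤ ∫ z : Phase d, CK * f z := by
        refine integral_mono_of_nonneg (ae_of_all _ fun z => norm_nonneg _)
          (hfint.const_mul CK) (ae_of_all _ fun z => ?_)
        dsimp only
        rw [norm_smul, Real.norm_of_nonneg (hfpos z), mul_comm CK]
        exact mul_le_mul_of_nonneg_left (hK _) (hfpos z)
    _ = CK := by rw [integral_const_mul, hfmass, mul_one]

lemma abs_RN_le (N : ℕ) {K : Edim d → Edim d} {f : Phase d → ℝ} {CK : ℝ}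
    (hK : ∀ x, ‖K x‖ ≤ CK) (hfpos : ∀ z, 0 ≤ f z) (hfint : Integrable f)
    (hfmass : ∫ z : Phase d, f z = 1) (Z : Fin N → Phase d) :
    |RN N K f Z| ≤ 2 * CK * ∑ i, ‖gradLogV f (Z i)‖ := by
  rcases Nat.eq_zero_or_pos N with rfl | hN
  · simp [RN]
  have hterm : ∀ i j, |⟪gradLogV f (Z i), K ((Z i).1 - (Z j).1) - Kconv K f ((Z i).1)⟫_ℝ|
      ≤ ‖gradLogV f (Z i)‖ * (2 * CK) := by
    intro i j
    refine (abs_real_inner_le_norm _ _).trans (mul_le_mul_of_nonneg_left ?_ (norm_nonneg _))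
    calc ‖K ((Z i).1 - (Z j).1) - Kconv K f ((Z i).1)‖
        ≤ ‖K ((Z i).1 - (Z j).1)‖ + ‖Kconv K f ((Z i).1)‖ := norm_sub_le _ _
      _ ≤ 2 * CK := by
          linarith [hK ((Z i).1 - (Z j).1), norm_Kconv_le hK hfpos hfint hfmass (Z i).1]
  calc |RN N K f Z|
      ≤ (N : ℝ)⁻¹ * ∑ i, ∑ _j : Fin N, ‖gradLogV f (Z i)‖ * (2 * CK) := by
        rw [RN, abs_mul, abs_of_nonneg (by positivity)]
        gcongr
        exact (Finset.abs_sum_le_sum_abs _ _).trans <| Finset.sum_le_sum fun i _ =>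
          (Finset.abs_sum_le_sum_abs _ _).trans <| Finset.sum_le_sum fun j _ => hterm i j
    _ = 2 * CK * ∑ i, ‖gradLogV f (Z i)‖ := by
        simp only [Finset.sum_const, Finset.card_univ, Fintype.card_fin, nsmul_eq_mul,
          ← Finset.mul_sum, ← Finset.sum_mul]
        field_simp

lemma abs_RN_pow_mul_fbar_le (N : ℕ) {K : Edim d → Edim d} {f : Phase d → ℝ} {CK : ℝ}
    (hK : ∀ x, ‖K x‖ ≤ CK) (hfpos : ∀ z, 0 ≤ f z) (hfint : Integrable f)
    (hfmass : ∫ z : Phase d, f z = 1) {t : ℝ} (ht : 0 < t) (n : ℕ) (Z : Fin N → Phase d) :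
    |RN N K f Z| ^ n * fbar N f Z
      ≤ n.factorial * (2 * CK / t) ^ n * ∏ i, (exp (t * ‖gradLogV f (Z i)‖) * f (Z i)) := by
  set S := ∑ i, ‖gradLogV f (Z i)‖
  have hCK : 0 ≤ CK := (norm_nonneg _).trans (hK 0)
  have hS : 0 ≤ S := Finset.sum_nonneg fun i _ => norm_nonneg _
  have hRN : |RN N K f Z| ^ n ≤ (2 * CK / t) ^ n * (t * S) ^ n := by
    rw [← mul_pow, show 2 * CK / t * (t * S) = 2 * CK * S by field_simp]
    gcongr
    exact abs_RN_le N hK hfpos hfint hfmass Z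
  calc |RN N K f Z| ^ n * fbar N f Z
      ≤ (2 * CK / t) ^ n * (n.factorial * exp (t * S)) * fbar N f Z := by
        gcongr
        · exact Finset.prod_nonneg fun i _ => hfpos _
        · exact hRN.trans (by gcongr; exact pow_le_factorial_mul_exp (by positivity) n)
    _ = n.factorial * (2 * CK / t) ^ n * ∏ i, (exp (t * ‖gradLogV f (Z i)‖) * f (Z i)) := by
        rw [Finset.prod_mul_distrib, Finset.mul_sum, exp_sum, fbar]
        ring

lemma factorial_inv_mul_lintegral_abs_RN_pow_mul_fbar_le (N : ℕ) {K : Edim d → Edim d}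
    {f : Phase d → ℝ} {CK : ℝ} (hK : ∀ x, ‖K x‖ ≤ CK) (hfpos : ∀ z, 0 ≤ f z)
    (hfint : Integrable f) (hfmass : ∫ z : Phase d, f z = 1) {Λ : ℝ} (hΛ0 : 0 ≤ Λ)
    (hmom : ∀ q : ℕ, ∫⁻ z : Phase d, ENNReal.ofReal (‖gradLogV f z‖ ^ q * f z)
      ≤ ENNReal.ofReal ((Λ * q) ^ q))
    {t : ℝ} (ht : 0 < t) (htΛ : t * Λ * exp 1 ≤ 1 / 2) (n : ℕ) :
    (n.factorial : ℝ≥0∞)⁻¹ *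
        ∫⁻ Z : Fin N → Phase d, ENNReal.ofReal (|RN N K f Z| ^ n * fbar N f Z)
      ≤ ENNReal.ofReal ((2 * CK / t) ^ n) * 2 ^ N := by
  have hCK : 0 ≤ CK := (norm_nonneg _).trans (hK 0)
  set G : Phase d → ℝ≥0∞ := fun z => ENNReal.ofReal (exp (t * ‖gradLogV f z‖) * f z)
  have hG : ∫⁻ z, G z ≤ 2 := lintegral_exp_mul_le_two hfint.aemeasurable hfpos
    (fun z => norm_nonneg _) hΛ0 hmom ht.le htΛ
  have hfact : (n.factorial : ℝ≥0∞)⁻¹ * n.factorial = 1 :=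
    ENNReal.inv_mul_cancel (by positivity) (ENNReal.natCast_ne_top _)
  calc (n.factorial : ℝ≥0∞)⁻¹ *
        ∫⁻ Z : Fin N → Phase d, ENNReal.ofReal (|RN N K f Z| ^ n * fbar N f Z)
      ≤ (n.factorial : ℝ≥0∞)⁻¹ * ∫⁻ Z : Fin N → Phase d,
          ENNReal.ofReal (n.factorial * (2 * CK / t) ^ n) * ∏ i, G (Z i) := by
        gcongr with Z
        rw [← ENNReal.ofReal_prod_of_nonneg fun i _ => by have := hfpos (Z i); positivity,
          ← ENNReal.ofReal_mul (by positivity)]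
        exact ENNReal.ofReal_le_ofReal (abs_RN_pow_mul_fbar_le N hK hfpos hfint hfmass ht n Z)
    _ = ENNReal.ofReal ((2 * CK / t) ^ n) * ∫⁻ Z : Fin N → Phase d, ∏ i, G (Z i) := by
        rw [lintegral_const_mul' _ _ ENNReal.ofReal_ne_top, ENNReal.ofReal_mul (by positivity),
          ENNReal.ofReal_natCast, ← mul_assoc, ← mul_assoc, hfact, one_mul]
    _ ≤ ENNReal.ofReal ((2 * CK / t) ^ n) * 2 ^ N := by
        rw [volume_pi]
        gcongr
        exact (lintegral_pi_prod_le volume G (fun _ => ENNReal.ofReal_ne_top) N).trans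
          (pow_le_pow_left' hG N)

end MeanField

theorem stmt6_general {d : ℕ} (N : ℕ) (K : Edim d → Edim d) (f : Phase d → ℝ)
    (CK : ℝ) (hK : ∀ x, ‖K x‖ ≤ CK)
    (hfpos : ∀ z, 0 ≤ f z) (hfint : Integrable f)
    (hfmass : ∫ z : Phase d, f z = 1)
    (Λ : ℝ)
    (hΛ : ∀ q : ℕ, 1 ≤ q →
      (∫⁻ z : Phase d, ENNReal.ofReal (‖gradLogV f z‖ ^ q * f z)) ^ (1 / (q : ℝ)) ≤
        ENNReal.ofReal (Λ * q)) :
    ∑' m : ℕ,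
      (((2 * (N / 3 + 1 + m)).factorial : ℝ≥0∞))⁻¹ *
        ∫⁻ Z : Fin N → Phase d,
          ENNReal.ofReal (|RN N K f Z| ^ (2 * (N / 3 + 1 + m)) * fbar N f Z) ≤
      ∑' m : ℕ,
        ENNReal.ofReal ((5 * Real.exp 1 ^ 2 * CK * Λ) ^ (2 * (N / 3 + 1 + m))) := by
  refine ENNReal.tsum_le_tsum fun m => ?_
  set k := N / 3 + 1 + m
  rcases le_or_gt Λ 0 with hΛ_nonpos | hΛ_pos
  · have hmom := lintegral_pow_mul_le_of_rpow_le hfint hfpos hfmass le_rfl fun q hq =>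
      (hΛ q hq).trans (ENNReal.ofReal_le_ofReal (by nlinarith [(Nat.cast_nonneg q : (0 : ℝ) ≤ q)]))
    refine le_of_eq_of_le ?_ zero_le
    exact ENNReal.eq_zero_of_forall_le_ofReal_div_pow_mul (ENNReal.pow_ne_top ENNReal.ofNat_ne_top)
      (2 * CK) (by omega) fun t ht =>
        factorial_inv_mul_lintegral_abs_RN_pow_mul_fbar_le N hK hfpos hfint hfmass le_rfl hmom ht
          (by simp) (2 * k)
  · have hmom := lintegral_pow_mul_le_of_rpow_le hfint hfpos hfmass hΛ_pos.le hΛ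
    calc _ ≤ ENNReal.ofReal ((2 * CK / (2 * exp 1 * Λ)⁻¹) ^ (2 * k)) * 2 ^ N :=
          factorial_inv_mul_lintegral_abs_RN_pow_mul_fbar_le N hK hfpos hfint hfmass hΛ_pos.le
            hmom (by positivity) (le_of_eq (by field_simp)) (2 * k)
      _ = ENNReal.ofReal ((4 * exp 1 * CK * Λ) ^ (2 * k)) * 2 ^ N := by
          rw [div_inv_eq_mul]; ring_nf
      _ ≤ _ := ofReal_four_exp_mul_pow_mul_two_pow_le CK Λ (by omega)

/-- **Large-`k` bound (Proposition 3.2 of the paper).**  Under the assumptions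
`f ∈ L^∞ ∩ L^1`, `f ≥ 0`, `∫ f = 1`, `∇_v f ∈ W^{1,p}_loc` for every `1 ≤ p ≤ ∞`,
and `Λ := sup_p M_p/p < ∞` (expressed by `(∫ |∇_v log f|^q f)^{1/q} ≤ Λ q`),
one has for `N ≥ 2`
`Σ_{k=⌊N/3⌋+1}^∞ (1/(2k)!) ∫ |R_N|^{2k} f̄_N dZ
  ≤ Σ_{k=⌊N/3⌋+1}^∞ (5e² ‖K‖_{L^∞} Λ)^{2k}`
(the sums are indexed by `k = N/3 + 1 + m`, `m ∈ ℕ`). -/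
theorem stmt6 {d : ℕ} (N : ℕ) (hN : 2 ≤ N) (K : Edim d → Edim d) (f : Phase d → ℝ)
    (CK : ℝ) (hK : ∀ x, ‖K x‖ ≤ CK) (hK0 : K 0 = 0)
    (hfpos : ∀ z, 0 ≤ f z) (hfint : Integrable f) (hfbdd : ∃ C, ∀ z, f z ≤ C)
    (hfmass : ∫ z : Phase d, f z = 1)
    (hreg : ∀ q : ℕ, 1 ≤ q →
      LocallyIntegrable (fun z => ‖gradV f z‖ ^ q) volume ∧
      LocallyIntegrable (fun z => ‖fderiv ℝ (gradV f) z‖ ^ q) volume)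
    (Λ : ℝ) (hΛ0 : 0 ≤ Λ)
    (hΛ : ∀ q : ℕ, 1 ≤ q →
      (∫⁻ z : Phase d, ENNReal.ofReal (‖gradLogV f z‖ ^ q * f z)) ^ (1 / (q : ℝ)) ≤
        ENNReal.ofReal (Λ * q)) :
    ∑' m : ℕ,
      (((2 * (N / 3 + 1 + m)).factorial : ℝ≥0∞))⁻¹ *
        ∫⁻ Z : Fin N → Phase d,
          ENNReal.ofReal (|RN N K f Z| ^ (2 * (N / 3 + 1 + m)) * fbar N f Z) ≤
      ∑' m : ℕ,
        ENNReal.ofReal ((5 * Real.exp 1 ^ 2 * CK * Λ) ^ (2 * (N / 3 + 1 + m))) :=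
  stmt6_general N K f CK hK hfpos hfint hfmass Λ hΛ
end

section
/- Assume 1 ≤ p ≤ q. Then the cardinality of the effective set satisfies |ℰ_{q,p}| ≤ Σ_{l=1}^{⌊p/2⌋} C(q,l) · l^p ≤ ⌊p/2⌋ · C(q, ⌊p/2⌋) · ⌊p/2⌋^p ≤ (p/2) · e^{p/2} · q^{p/2} · (p/2)^{p/2}, where C(q,l) denotes the binomial coefficient q choose l. -/
/-!
A tuple of `ℰ_{q,p}` takes each of its values at least twice, so its range `S ⊆ {1, …, q}`
has `l ≤ ⌊p/2⌋` elements and the tuple lies in `S^p`; counting the pairs `(S, I)` gives the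
first bound. Binomial coefficients `C(q, l)` increase in `l ≤ q/2`, which gives the second.
The third follows from `C(q, m) ≤ q^m / m!` and `m^m / m! ≤ e^m` for `m = ⌊p/2⌋`, together
with `q^m m^(p-m) ≤ q^(p/2) (p/2)^(p/2)`.
-/

/-- The "effective set" `ℰ_{q,p}`: `p`-tuples `I = (i_1, …, i_p)` with entries in
`{1, …, q}` such that no value appears with multiplicity exactly one, i.e. every
component `a_l = |{ν : i_ν = l}|` of the multiplicity function satisfies `a_l ≠ 1`. -/
def EffectiveSet (q p : ℕ) : Set (Fin p → ℕ) :=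
  {I | (∀ ν, 1 ≤ I ν ∧ I ν ≤ q) ∧
    ∀ l, (Finset.univ.filter (fun ν => I ν = l)).card ≠ 1}

open Finset

theorem two_mul_card_image_le_card {ι β : Type*} [DecidableEq β] (s : Finset ι) (f : ι → β)
    (hf : ∀ b, #{a ∈ s | f a = b} ≠ 1) : 2 * #(s.image f) ≤ #s := by
  rw [card_eq_sum_card_image f s, mul_comm, ← smul_eq_mul, ← sum_const]
  refine sum_le_sum fun b hb => ?_
  obtain ⟨a, ha, rfl⟩ := mem_image.1 hb
  have hpos : 0 < #{a' ∈ s | f a' = f a} := card_pos.2 ⟨a, mem_filter.2 ⟨ha, rfl⟩⟩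
  have := hf (f a)
  omega

theorem card_biUnion_powersetCard_piFinset_le {ι α : Type*} [Fintype ι] [DecidableEq ι]
    [DecidableEq α] (s : Finset α) (l : ℕ) :
    #((s.powersetCard l).biUnion fun S => Fintype.piFinset fun _ : ι => S) ≤
      (#s).choose l * l ^ Fintype.card ι :=
  calc _ ≤ ∑ S ∈ s.powersetCard l, #(Fintype.piFinset fun _ : ι => S) := card_biUnion_le
    _ = ∑ S ∈ s.powersetCard l, l ^ Fintype.card ι := sum_congr rfl fun S hS => by
        rw [Fintype.card_piFinset, prod_const, (mem_powersetCard.1 hS).2, card_univ]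
    _ = _ := by rw [sum_const, card_powersetCard, smul_eq_mul]

theorem effectiveSet_subset_biUnion_piFinset (q p : ℕ) (hp : 1 ≤ p) :
    EffectiveSet q p ⊆ ↑((Icc 1 (p / 2)).biUnion fun l =>
      ((Icc 1 q).powersetCard l).biUnion fun S => Fintype.piFinset fun _ : Fin p => S) := by
  rintro I ⟨hrange, hfiber⟩
  have hmem : ∀ ν, I ν ∈ univ.image I := fun ν => mem_image_of_mem I (mem_univ ν)
  have hhalf := two_mul_card_image_le_card univ I hfiber
  rw [card_univ, Fintype.card_fin] at hhalf
  have hne : 0 < #(univ.image I) := card_pos.2 ⟨_, hmem ⟨0, hp⟩⟩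
  have hsub : univ.image I ⊆ Icc 1 q := by
    simpa only [image_subset_iff, mem_Icc] using fun ν _ => hrange ν
  simp only [coe_biUnion, Set.mem_iUnion, mem_coe, mem_Icc, mem_powersetCard,
    Fintype.mem_piFinset]
  exact ⟨_, ⟨hne, by omega⟩, _, ⟨hsub, rfl⟩, hmem⟩

theorem ncard_effectiveSet_le (q p : ℕ) (hp : 1 ≤ p) :
    (EffectiveSet q p).ncard ≤ ∑ l ∈ Icc 1 (p / 2), q.choose l * l ^ p := by
  refine (Set.ncard_le_ncard (effectiveSet_subset_biUnion_piFinset q p hp)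
    (finite_toSet _)).trans ?_
  rw [Set.ncard_coe_finset]
  refine card_biUnion_le.trans (sum_le_sum fun l _ => ?_)
  simpa using card_biUnion_powersetCard_piFinset_le (ι := Fin p) (Icc 1 q) l

theorem Nat.choose_le_choose_of_le_half {n a b : ℕ} (hab : a ≤ b) (hb : b ≤ n / 2) :
    n.choose a ≤ n.choose b := by
  induction b, hab using Nat.le_induction with
  | base => rfl
  | succ k _ ih => exact (ih (by omega)).trans (Nat.choose_le_succ_of_lt_half_left (by omega))

theorem sum_choose_mul_pow_le (n m p : ℕ) (hm : m ≤ n / 2) :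
    ∑ l ∈ Icc 1 m, n.choose l * l ^ p ≤ m * n.choose m * m ^ p :=
  calc _ ≤ ∑ _l ∈ Icc 1 m, n.choose m * m ^ p := sum_le_sum fun l hl => by
        have hlm := (mem_Icc.1 hl).2
        gcongr
        exact Nat.choose_le_choose_of_le_half hlm hm
    _ = _ := by rw [sum_const, Nat.card_Icc, smul_eq_mul, Nat.add_sub_cancel, mul_assoc]

theorem choose_mul_pow_le_exp_mul (q m p : ℕ) (hmp : m ≤ p) :
    (q.choose m * m ^ p : ℝ) ≤ Real.exp m * q ^ m * m ^ (p - m) := by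
  have hchoose : (q.choose m : ℝ) ≤ q ^ m / m.factorial := Nat.choose_le_pow_div m q
  have hexp : (m : ℝ) ^ m / m.factorial ≤ Real.exp m :=
    Real.pow_div_factorial_le_exp _ (Nat.cast_nonneg m) m
  have hsplit : (m : ℝ) ^ p = m ^ m * m ^ (p - m) := by rw [← pow_add, Nat.add_sub_cancel' hmp]
  calc (q.choose m * m ^ p : ℝ) ≤ q ^ m / m.factorial * m ^ p := by gcongr
    _ = (m : ℝ) ^ m / m.factorial * (q ^ m * m ^ (p - m)) := by rw [hsplit]; ring
    _ ≤ Real.exp m * (q ^ m * m ^ (p - m)) := by gcongr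
    _ = _ := by ring

theorem rpow_mul_rpow_two_mul_sub_le {x y P : ℝ} (hx : 0 < x) (hxP : x ≤ P) (hxy : x ≤ y) :
    y ^ x * x ^ (2 * P - x) ≤ y ^ P * P ^ P := by
  have hy : 0 < y := hx.trans_le hxy
  calc y ^ x * x ^ (2 * P - x) = y ^ x * x ^ (P - x) * x ^ P := by
        rw [mul_assoc, ← Real.rpow_add hx]; ring_nf
    _ ≤ y ^ x * y ^ (P - x) * P ^ P := by
        have hPx : 0 ≤ P - x := sub_nonneg.2 hxP
        gcongr
        exact hx.le.trans hxP
    _ = y ^ P * P ^ P := by rw [← Real.rpow_add hy]; ring_nf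

theorem half_mul_choose_mul_pow_le (q p : ℕ) (hpq : p ≤ q) :
    ((p / 2 * q.choose (p / 2) * (p / 2) ^ p : ℕ) : ℝ) ≤
      ((p : ℝ) / 2) * Real.exp ((p : ℝ) / 2) * (q : ℝ) ^ ((p : ℝ) / 2) *
        ((p : ℝ) / 2) ^ ((p : ℝ) / 2) := by
  set m := p / 2
  set P := (p : ℝ) / 2 with hP_def
  have hmp : m ≤ p := Nat.div_le_self p 2
  have hmP : (m : ℝ) ≤ P := by
    rw [hP_def, le_div_iff₀ two_pos]
    exact_mod_cast Nat.div_mul_le_self p 2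
  rcases Nat.eq_zero_or_pos m with hm | hm
  · simp only [hm, zero_mul, Nat.cast_zero]
    positivity
  have hpow : (q : ℝ) ^ m * (m : ℝ) ^ (p - m) ≤ q ^ P * P ^ P := by
    have := rpow_mul_rpow_two_mul_sub_le (Nat.cast_pos.2 hm) hmP (Nat.cast_le.2 (hmp.trans hpq))
    rwa [hP_def, mul_div_cancel₀ _ two_ne_zero, ← hP_def, ← Nat.cast_sub hmp,
      Real.rpow_natCast, Real.rpow_natCast] at this
  push_cast
  calc (m : ℝ) * q.choose m * m ^ p = m * (q.choose m * m ^ p) := mul_assoc _ _ _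
    _ ≤ P * (Real.exp m * q ^ m * m ^ (p - m)) :=
        mul_le_mul hmP (choose_mul_pow_le_exp_mul q m p hmp) (by positivity) (by positivity)
    _ ≤ P * (Real.exp P * (q ^ P * P ^ P)) := by rw [mul_assoc (Real.exp _)]; gcongr
    _ = _ := by ring

/-- **Bound on the cardinality of the effective set** (Lemma 3.4 of the paper).
For `1 ≤ p ≤ q`,
`|ℰ_{q,p}| ≤ Σ_{l=1}^{⌊p/2⌋} C(q,l) l^p ≤ ⌊p/2⌋ C(q,⌊p/2⌋) ⌊p/2⌋^p
  ≤ (p/2) e^{p/2} q^{p/2} (p/2)^{p/2}`. -/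
theorem stmt10 (q p : ℕ) (hp : 1 ≤ p) (hpq : p ≤ q) :
    (EffectiveSet q p).ncard ≤ ∑ l ∈ Finset.Icc 1 (p / 2), Nat.choose q l * l ^ p ∧
    (∑ l ∈ Finset.Icc 1 (p / 2), Nat.choose q l * l ^ p
      ≤ (p / 2) * Nat.choose q (p / 2) * (p / 2) ^ p) ∧
    (((p / 2 * Nat.choose q (p / 2) * (p / 2) ^ p : ℕ) : ℝ) ≤
      ((p : ℝ) / 2) * Real.exp ((p : ℝ) / 2) * (q : ℝ) ^ ((p : ℝ) / 2) *
        ((p : ℝ) / 2) ^ ((p : ℝ) / 2)) :=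
  ⟨ncard_effectiveSet_le q p hp, sum_choose_mul_pow_le q (p / 2) p (Nat.div_le_div_right hpq),
    half_mul_choose_mul_pow_le q p hpq⟩
end

section
/- Assume 3k ≤ N and let I_{2k} ∈ ℰ_{N,2k} with |S(I_{2k})| = l (so 1 ≤ l ≤ k). Then |𝒫^{I_{2k}}_{N,2k}| = l^{2k} + Σ_{h=2}^{2k} l^{2k−h} · C(2k,h) · |ℰ_{N−l,h}|, and moreover |𝒫^{I_{2k}}_{N,2k}| ≤ 2k · e^k · 2^{2k} · k^k · N^k, where C(2k,h) denotes the binomial coefficient 2k choose h. -/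
/-- The "effective set" `𝒫^{I}_{N,2k}` of indices `J = (j_1, …, j_{2k})` with entries in
`{1, …, N}` such that either every `j_ν` lies in `S(I)` (the set of values of `I`), or
every `j_ν` outside `S(I)` is repeated, i.e. there exists `ν' ≠ ν` with `j_{ν'} = j_ν`. -/
def PSetJ (N k : ℕ) (I : Fin (2 * k) → ℕ) : Set (Fin (2 * k) → ℕ) :=
  {J | (∀ ν, 1 ≤ J ν ∧ J ν ≤ N) ∧
    ((∀ ν, J ν ∈ Set.range I) ∨
      (∀ ν, J ν ∉ Set.range I → ∃ ν', ν' ≠ ν ∧ J ν' = J ν))}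

open Finset

section Repeating

variable {α α' β β' : Type*}

def IsRepeating (f : α → β) : Prop :=
  ∀ a, ∃ a', a' ≠ a ∧ f a' = f a

def RepeatsOutside (S : Set β) (f : α → β) : Prop :=
  ∀ a, f a ∉ S → ∃ a', a' ≠ a ∧ f a' = f a

theorem IsRepeating.repeatsOutside {f : α → β} (hf : IsRepeating f) (S : Set β) :
    RepeatsOutside S f :=
  fun a _ ↦ hf a

theorem isRepeating_iff_card_filter_ne_one [Fintype α] [DecidableEq β] {f : α → β} :
    IsRepeating f ↔ ∀ b, #{a | f a = b} ≠ 1 := by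
  constructor
  · intro hf b hb
    obtain ⟨a, ha⟩ := card_eq_one.1 hb
    have hfiber : ∀ x, f x = b ↔ x = a := fun x ↦ by simpa using Finset.ext_iff.1 ha x
    obtain ⟨a', hne, heq⟩ := hf a
    exact hne ((hfiber a').1 (heq.trans ((hfiber a).2 rfl)))
  · intro hf a
    have hmem : a ∈ ({a' | f a' = f a} : Finset α) := by simp
    obtain ⟨a', ha', hne⟩ :=
      exists_mem_ne (lt_of_le_of_ne (card_pos.2 ⟨a, hmem⟩) (hf (f a)).symm) a
    exact ⟨a', hne, (mem_filter.1 ha').2⟩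

theorem isRepeating_comp_left_iff {φ : β → β'} (hφ : φ.Injective) {f : α → β} :
    IsRepeating (φ ∘ f) ↔ IsRepeating f := by
  simp only [IsRepeating, Function.comp_apply, hφ.eq_iff]

theorem isRepeating_comp_equiv_iff (e : α' ≃ α) {f : α → β} :
    IsRepeating (f ∘ e) ↔ IsRepeating f := by
  constructor
  · intro h a
    obtain ⟨a', hne, heq⟩ := h (e.symm a)
    exact ⟨e a', by rwa [Ne, ← e.eq_symm_apply], by simpa using heq⟩
  · intro h a
    obtain ⟨a', hne, heq⟩ := h (e a)
    exact ⟨e.symm a', by rwa [Ne, e.symm_apply_eq], by simpa using heq⟩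

theorem natCard_isRepeating_congr (eα : α ≃ α') (eβ : β ≃ β') :
    Nat.card {f : α → β // IsRepeating f} = Nat.card {f : α' → β' // IsRepeating f} :=
  Nat.card_congr <| (eα.arrowCongr eβ).subtypeEquiv fun _ ↦
    ((isRepeating_comp_equiv_iff eα.symm).trans (isRepeating_comp_left_iff eβ.injective)).symm

theorem natCard_isRepeating_mem (U : Set β) :
    Nat.card {f : α → β // (∀ a, f a ∈ U) ∧ IsRepeating f} =
      Nat.card {g : α → U // IsRepeating g} :=
  Nat.card_congr
    { toFun := fun f ↦ ⟨fun a ↦ ⟨f.1 a, f.2.1 a⟩,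
        (isRepeating_comp_left_iff Subtype.val_injective).1 f.2.2⟩
      invFun := fun g ↦ ⟨fun a ↦ g.1 a, fun a ↦ (g.1 a).2,
        (isRepeating_comp_left_iff Subtype.val_injective).2 g.2⟩
      left_inv := fun _ ↦ rfl
      right_inv := fun _ ↦ rfl }

def repeatingOutsideSet (U S : Finset β) : Set (α → β) :=
  {J | (∀ a, J a ∈ U) ∧ RepeatsOutside ↑S J}

theorem effectiveSet_eq (q p : ℕ) :
    EffectiveSet q p = {I | (∀ ν, I ν ∈ Set.Icc 1 q) ∧ IsRepeating I} := by
  ext I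
  simp only [EffectiveSet, Set.mem_ofPred_eq, Set.mem_Icc, isRepeating_iff_card_filter_ne_one]

theorem ncard_effectiveSet_eq [Finite α] [Finite β] {p q : ℕ}
    (hα : Nat.card α = p) (hβ : Nat.card β = q) :
    (EffectiveSet q p).ncard = Nat.card {f : α → β // IsRepeating f} := by
  rw [effectiveSet_eq]
  change Nat.card {I : Fin p → ℕ // (∀ ν, I ν ∈ Set.Icc 1 q) ∧ IsRepeating I} = _
  have hIcc : Nat.card (Set.Icc 1 q) = q := by simp
  rw [natCard_isRepeating_mem]
  exact natCard_isRepeating_congr ((finCongr hα.symm).trans (Finite.equivFin α).symm)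
    ((Finite.equivFin _).trans ((finCongr (hIcc.trans hβ.symm)).trans (Finite.equivFin β).symm))

theorem ncard_effectiveSet_zero (q : ℕ) : (EffectiveSet q 0).ncard = 1 := by
  rw [ncard_effectiveSet_eq (α := Fin 0) (β := Fin q) (by simp) (by simp),
    Nat.card_congr (Equiv.subtypeUnivEquiv (p := IsRepeating) fun (_ : Fin 0 → Fin q) a ↦ a.elim0),
    Nat.card_fun]
  simp

theorem ncard_effectiveSet_one (q : ℕ) : (EffectiveSet q 1).ncard = 0 := by
  rw [ncard_effectiveSet_eq (α := Fin 1) (β := Fin q) (by simp) (by simp)]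
  refine Nat.card_eq_zero.2 (Or.inl ⟨fun ⟨f, hf⟩ ↦ ?_⟩)
  obtain ⟨a', hne, -⟩ := hf 0
  exact hne (Subsingleton.elim _ _)

section Fibers

variable [Fintype α] [DecidableEq α] [DecidableEq β] {S U : Finset β}

theorem mem_repeatingOutsideSet_and_filter_eq_iff (hSU : S ⊆ U) (T : Finset α) (J : α → β) :
    J ∈ repeatingOutsideSet U S ∧ ({a | J a ∉ S} : Finset α) = T ↔
      (∀ a, a ∉ T → J a ∈ S) ∧ (∀ a, a ∈ T → J a ∈ U \ S) ∧
        IsRepeating fun a : T ↦ J a := by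
  constructor
  · rintro ⟨⟨hU, hrep⟩, rfl⟩
    refine ⟨fun a ha ↦ by simpa using ha, fun a ha ↦ ?_, fun a ↦ ?_⟩
    · exact mem_sdiff.2 ⟨hU a, (mem_filter.1 ha).2⟩
    · obtain ⟨a', hne, heq⟩ := hrep a (mem_filter.1 a.2).2
      exact ⟨⟨a', mem_filter.2 ⟨mem_univ _, heq ▸ (mem_filter.1 a.2).2⟩⟩,
        fun h ↦ hne (congrArg Subtype.val h), heq⟩
  · rintro ⟨hS, hUS, hrep⟩
    have hT : ∀ a, a ∈ T ↔ J a ∉ S := fun a ↦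
      ⟨fun ha ↦ (mem_sdiff.1 (hUS a ha)).2, fun h ↦ by_contra fun ha ↦ h (hS a ha)⟩
    refine ⟨⟨fun a ↦ ?_, fun a ha ↦ ?_⟩, by ext a; simp [hT]⟩
    · by_cases ha : a ∈ T
      · exact (mem_sdiff.1 (hUS a ha)).1
      · exact hSU (hS a ha)
    · obtain ⟨a', hne, heq⟩ := hrep ⟨a, (hT a).2 ha⟩
      exact ⟨a', fun h ↦ hne (Subtype.ext h), heq⟩

def repeatingOutsideFiberEquiv (hSU : S ⊆ U) (T : Finset α) :
    {J : repeatingOutsideSet U S // ({a | J.1 a ∉ S} : Finset α) = T} ≃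
      ({a // a ∉ T} → S) × {g : T → ↥(U \ S) // IsRepeating g} :=
  ((Equiv.subtypeSubtypeEquivSubtypeInter _ _).trans
    (Equiv.subtypeEquivRight (mem_repeatingOutsideSet_and_filter_eq_iff hSU T))).trans
  { toFun := fun J ↦ (fun a ↦ ⟨J.1 a, J.2.1 a a.2⟩,
      ⟨fun a ↦ ⟨J.1 a, J.2.2.1 a a.2⟩, (isRepeating_comp_left_iff Subtype.val_injective).1 J.2.2.2⟩)
    invFun := fun fg ↦ ⟨fun a ↦ if h : a ∈ T then fg.2.1 ⟨a, h⟩ else fg.1 ⟨a, h⟩,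
      fun a ha ↦ by simp [ha], fun a ha ↦ by simp [ha], by
        convert (isRepeating_comp_left_iff Subtype.val_injective).2 fg.2.2 using 1
        funext a
        simp [a.2]⟩
    left_inv := fun J ↦ by
      ext a
      by_cases ha : a ∈ T <;> simp [ha]
    right_inv := fun fg ↦ by
      ext a <;> simp [a.2] }

theorem ncard_repeatingOutsideSet (hSU : S ⊆ U) :
    (repeatingOutsideSet U S : Set (α → β)).ncard =
      ∑ T : Finset α, #S ^ (Fintype.card α - #T) * (EffectiveSet (#U - #S) #T).ncard := by
  let leaveS (J : repeatingOutsideSet U S) : Finset α := {a | J.1 a ∉ S}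
  rw [← Nat.card_coe_set_eq, Nat.card_congr ((Equiv.sigmaFiberEquiv leaveS).symm.trans
      (Equiv.sigmaCongrRight (repeatingOutsideFiberEquiv hSU))), Nat.card_sigma]
  refine sum_congr rfl fun T _ ↦ ?_
  rw [Nat.card_prod, Nat.card_fun,
    ncard_effectiveSet_eq (α := T) (β := ↥(U \ S)) (by simp)
      (by rw [Nat.card_eq_finsetCard, card_sdiff_of_subset hSU])]
  simp

theorem ncard_repeatingOutsideSet_eq_sum_choose (hSU : S ⊆ U) :
    (repeatingOutsideSet U S : Set (α → β)).ncard =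
      #S ^ Fintype.card α + ∑ h ∈ Icc 2 (Fintype.card α),
        #S ^ (Fintype.card α - h) * (Fintype.card α).choose h *
          (EffectiveSet (#U - #S) h).ncard := by
  let n := Fintype.card α
  let f : ℕ → ℕ := fun h ↦ #S ^ (n - h) * (EffectiveSet (#U - #S) h).ncard
  have hf1 : f 1 = 0 := by simp [f, ncard_effectiveSet_one]
  have hsum : ∑ h ∈ Ico 1 (n + 1), n.choose h * f h = ∑ h ∈ Ico 2 (n + 1), n.choose h * f h :=
    (sum_subset (Ico_subset_Ico_left one_le_two) fun h h₁ h₂ ↦ by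
      obtain rfl : h = 1 := by simp only [mem_Ico] at h₁ h₂; omega
      simp [hf1]).symm
  rw [ncard_repeatingOutsideSet hSU, ← powerset_univ, sum_powerset_apply_card f, card_univ,
    range_eq_Ico, sum_eq_sum_Ico_succ_bot (by omega : 0 < n + 1)]
  simp only [smul_eq_mul, zero_add]
  rw [hsum, Finset.Ico_add_one_right_eq_Icc]
  simp only [f, ncard_effectiveSet_zero]
  rw [Nat.choose_zero_right, Nat.sub_zero, one_mul, mul_one]
  exact congrArg _ (sum_congr rfl fun h _ ↦ by ring)

end Fibers

section Bound

variable [Fintype α] [DecidableEq β] {S U : Finset β}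

theorem two_mul_card_image_sdiff_le {J : α → β} (hJ : RepeatsOutside ↑S J) :
    2 * #(univ.image J \ S) ≤ Fintype.card α := by
  have htwice : ∀ w ∈ univ.image J \ S, 2 ≤ #{a | J a = w} := by
    intro w hw
    obtain ⟨hw, hwS⟩ := mem_sdiff.1 hw
    obtain ⟨a, -, rfl⟩ := mem_image.1 hw
    obtain ⟨a', hne, heq⟩ := hJ a hwS
    exact one_lt_card.2 ⟨a, by simp, a', by simp [heq], fun h ↦ hne h.symm⟩
  calc 2 * #(univ.image J \ S) = ∑ _w ∈ univ.image J \ S, 2 := by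
        rw [sum_const, smul_eq_mul, mul_comm]
    _ ≤ ∑ w ∈ univ.image J \ S, #{a | J a = w} := sum_le_sum htwice
    _ = #{a | J a ∈ univ.image J \ S} := sum_card_fiberwise_eq_card_filter _ _ _
    _ ≤ Fintype.card α := card_le_univ _

theorem ncard_repeatingOutsideSet_le [DecidableEq α] {m : ℕ} (hα : Fintype.card α ≤ 2 * m)
    (hmU : m ≤ #U) :
    (repeatingOutsideSet U S : Set (α → β)).ncard ≤ (#U).choose m * (#S + m) ^ Fintype.card α := by
  have hcover : (repeatingOutsideSet U S : Set (α → β)) ⊆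
      ↑((U.powersetCard m).biUnion fun W ↦ Fintype.piFinset fun _ : α ↦ S ∪ W) := by
    rintro J ⟨hU, hrep⟩
    have hWU : univ.image J \ S ⊆ U := fun x hx ↦ by
      obtain ⟨a, -, rfl⟩ := mem_image.1 (mem_sdiff.1 hx).1
      exact hU a
    obtain ⟨W, hJW, hWU, hWm⟩ := exists_subsuperset_card_eq hWU
      (by have := two_mul_card_image_sdiff_le hrep; omega) hmU
    refine mem_biUnion.2 ⟨W, mem_powersetCard.2 ⟨hWU, hWm⟩, Fintype.mem_piFinset.2 fun a ↦ ?_⟩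
    by_cases ha : J a ∈ S
    · exact mem_union_left _ ha
    · exact mem_union_right _ (hJW (mem_sdiff.2 ⟨mem_image_of_mem _ (mem_univ a), ha⟩))
  calc (repeatingOutsideSet U S : Set (α → β)).ncard
      ≤ #((U.powersetCard m).biUnion fun W ↦ Fintype.piFinset fun _ : α ↦ S ∪ W) := by
        simpa only [Set.ncard_coe_finset] using Set.ncard_le_ncard hcover (finite_toSet _)
    _ ≤ #(U.powersetCard m) * (#S + m) ^ Fintype.card α := by
        refine card_biUnion_le_card_mul _ _ _ fun W hW ↦ ?_
        rw [Fintype.card_piFinset, prod_const, card_univ]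
        gcongr
        exact (card_union_le _ _).trans (by rw [(mem_powersetCard.1 hW).2])
    _ = (#U).choose m * (#S + m) ^ Fintype.card α := by rw [card_powersetCard]

end Bound

end Repeating

theorem choose_mul_pow_le_exp_mul_pow (N k : ℕ) :
    (N.choose k : ℝ) * k ^ k ≤ Real.exp k * N ^ k := by
  have hfac : (0 : ℝ) < k.factorial := by positivity
  have hexp : (k : ℝ) ^ k ≤ Real.exp k * k.factorial :=
    (div_le_iff₀ hfac).1 (Real.pow_div_factorial_le_exp _ k.cast_nonneg k)
  calc (N.choose k : ℝ) * k ^ k ≤ (N ^ k / k.factorial) * (Real.exp k * k.factorial) := by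
        gcongr
        exact Nat.choose_le_pow_div k N
    _ = Real.exp k * N ^ k := by field_simp

theorem choose_mul_two_mul_pow_le {N k : ℕ} (hk : 1 ≤ k) :
    (N.choose k : ℝ) * (2 * k) ^ (2 * k) ≤ 2 * k * Real.exp k * 2 ^ (2 * k) * k ^ k * N ^ k := by
  have hk1 : (1 : ℝ) ≤ 2 * k := by norm_cast; omega
  calc (N.choose k : ℝ) * (2 * k) ^ (2 * k) = 2 ^ (2 * k) * k ^ k * (N.choose k * k ^ k) := by
        ring
    _ ≤ 2 ^ (2 * k) * k ^ k * (Real.exp k * N ^ k) :=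
        mul_le_mul_of_nonneg_left (choose_mul_pow_le_exp_mul_pow N k) (by positivity)
    _ ≤ 2 * k * (2 ^ (2 * k) * k ^ k * (Real.exp k * N ^ k)) :=
        le_mul_of_one_le_left (by positivity) hk1
    _ = 2 * k * Real.exp k * 2 ^ (2 * k) * k ^ k * N ^ k := by ring

theorem pSetJ_eq_repeatingOutsideSet (N k : ℕ) (I : Fin (2 * k) → ℕ) :
    PSetJ N k I = repeatingOutsideSet (Icc 1 N) (univ.image I) := by
  ext J
  simp only [PSetJ, repeatingOutsideSet, RepeatsOutside, coe_image, coe_univ, Set.image_univ,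
    mem_Icc, Set.mem_ofPred_eq]
  exact and_congr_right fun _ ↦ or_iff_right_of_imp fun h ν hν ↦ absurd (h ν) hν

/-- **Counting the choices of the multi-indices `J_{2k}`** (Lemma 3.5 of the paper).
Assume `3k ≤ N` and `I_{2k} ∈ ℰ_{N,2k}` with `|S(I_{2k})| = l`.  Then
`|𝒫^{I}_{N,2k}| = l^{2k} + Σ_{h=2}^{2k} l^{2k−h} C(2k,h) |ℰ_{N−l,h}|`, and moreover
`|𝒫^{I}_{N,2k}| ≤ 2k e^k 2^{2k} k^k N^k`. -/
theorem stmt11 (N k l : ℕ) (hk : 1 ≤ k) (hkN : 3 * k ≤ N)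
    (I : Fin (2 * k) → ℕ) (hI : I ∈ EffectiveSet N (2 * k))
    (hl : (Finset.univ.image I).card = l) :
    (PSetJ N k I).ncard =
      l ^ (2 * k) + ∑ h ∈ Finset.Icc 2 (2 * k),
        l ^ (2 * k - h) * Nat.choose (2 * k) h * (EffectiveSet (N - l) h).ncard ∧
    ((PSetJ N k I).ncard : ℝ) ≤
      2 * (k : ℝ) * Real.exp k * 2 ^ (2 * k) * (k : ℝ) ^ k * (N : ℝ) ^ k := by
  rw [effectiveSet_eq] at hI
  obtain ⟨hIN, hIrep⟩ := hI
  have hSU : univ.image I ⊆ Icc 1 N := fun x hx ↦ by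
    obtain ⟨ν, -, rfl⟩ := mem_image.1 hx
    simpa using hIN ν
  have hlk : l ≤ k := by
    have := two_mul_card_image_sdiff_le (hIrep.repeatsOutside ↑(∅ : Finset ℕ))
    simp only [sdiff_empty, hl, Fintype.card_fin] at this
    omega
  rw [pSetJ_eq_repeatingOutsideSet]
  refine ⟨by simpa [hl] using ncard_repeatingOutsideSet_eq_sum_choose (α := Fin (2 * k)) hSU, ?_⟩
  have hcount := ncard_repeatingOutsideSet_le (α := Fin (2 * k)) (S := univ.image I)
    (U := Icc 1 N) (m := k) (by simp) (by rw [Nat.card_Icc]; omega)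
  simp only [Fintype.card_fin, Nat.card_Icc, add_tsub_cancel_right, hl] at hcount
  calc ((repeatingOutsideSet (Icc 1 N) (univ.image I) : Set (Fin (2 * k) → ℕ)).ncard : ℝ)
      ≤ N.choose k * (2 * k) ^ (2 * k) := by
        exact_mod_cast hcount.trans (Nat.mul_le_mul_left _ (Nat.pow_le_pow_left (by omega) _))
    _ ≤ 2 * k * Real.exp k * 2 ^ (2 * k) * k ^ k * N ^ k := choose_mul_two_mul_pow_le hk
end

section
/- For integers k ≥ 1 and 1 ≤ l ≤ k, define U^l_{2k} = Σ over all l-tuples (a_1,…,a_l) of integers with a_1 + … + a_l = 2k and a_ν ≥ 2 for all ν, of (2k)!/(a_1! ⋯ a_l!) · a_1^{a_1} ⋯ a_l^{a_l}. Then U^l_{2k} ≤ e^{2k} · (2k)! · C(2k−l−1, l−1), and moreover C(2k−l−1, l−1) ≤ C(2k, k) ≤ 2^{2k}/√k, so that U^l_{2k} ≤ (1/√k) · (2e)^{2k} · (2k)!. -/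
/-!
Bounding `n^n ≤ eⁿ n!` factor by factor turns every summand of `U^l_{2k}` into at most
`e^{2k} (2k)!`, since the exponents add up to `2k`. Subtracting `2` from every entry maps the
admissible tuples injectively to `l`-tuples of naturals with sum `2k - 2l`, of which there are
`C(2k-l-1, l-1) ≤ C(2k, k)`. Finally `C(2n, n)² (2n+1) ≤ 16ⁿ` by induction on `n`, because the
ratio of consecutive terms is `4(2n+1)(2n+3)/(n+1)² ≤ 16`.
-/

/-- The quantity `U^l_{2k} = Σ (2k)!/(a_1! ⋯ a_l!) · a_1^{a_1} ⋯ a_l^{a_l}`, the sum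
ranging over all `l`-tuples `(a_1, …, a_l)` of integers with `a_1 + … + a_l = 2k` and
`a_ν ≥ 2` for all `ν`. -/
noncomputable def Ulk (k l : ℕ) : ℝ :=
  ∑ a ∈ (Finset.Nat.antidiagonalTuple l (2 * k)).filter (fun a => ∀ ν, 2 ≤ a ν),
    (((2 * k).factorial : ℝ) / ∏ ν, ((a ν).factorial : ℝ)) * ∏ ν, (a ν : ℝ) ^ (a ν)

open Finset Nat Real

lemma pow_self_le_exp_one_pow_mul_factorial (n : ℕ) : (n : ℝ) ^ n ≤ exp 1 ^ n * n ! := by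
  rw [← exp_nat_mul, mul_one, ← div_le_iff₀ (by positivity)]
  exact pow_div_factorial_le_exp _ n.cast_nonneg n

lemma factorial_div_prod_factorial_mul_prod_pow_self_le {ι : Type*} [Fintype ι] (a : ι → ℕ) :
    ((∑ ν, a ν)! / ∏ ν, ((a ν)! : ℝ)) * ∏ ν, (a ν : ℝ) ^ a ν ≤
      exp 1 ^ (∑ ν, a ν) * (∑ ν, a ν)! := by
  have hprod : ∏ ν, (a ν : ℝ) ^ a ν ≤ exp 1 ^ (∑ ν, a ν) * ∏ ν, ((a ν)! : ℝ) :=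
    calc ∏ ν, (a ν : ℝ) ^ a ν ≤ ∏ ν, (exp 1 ^ a ν * (a ν)!) :=
          prod_le_prod (fun _ _ => by positivity)
            (fun ν _ => pow_self_le_exp_one_pow_mul_factorial (a ν))
      _ = exp 1 ^ (∑ ν, a ν) * ∏ ν, ((a ν)! : ℝ) := by
          rw [prod_mul_distrib, prod_pow_eq_pow_sum]
  calc ((∑ ν, a ν)! / ∏ ν, ((a ν)! : ℝ)) * ∏ ν, (a ν : ℝ) ^ a ν
      ≤ ((∑ ν, a ν)! / ∏ ν, ((a ν)! : ℝ)) * (exp 1 ^ (∑ ν, a ν) * ∏ ν, ((a ν)! : ℝ)) :=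
        mul_le_mul_of_nonneg_left hprod (by positivity)
    _ = exp 1 ^ (∑ ν, a ν) * (∑ ν, a ν)! := by field_simp

lemma card_filter_two_le_antidiagonalTuple_le_multichoose (l n : ℕ) :
    #((Nat.antidiagonalTuple l n).filter (fun a => ∀ ν, 2 ≤ a ν)) ≤
      l.multichoose (n - 2 * l) := by
  have hcard : #((univ : Finset (Fin l)).finsuppAntidiag (n - 2 * l)) =
      l.multichoose (n - 2 * l) := by
    rw [card_finsuppAntidiag_nat_eq_multichoose, Finset.card_fin]
  rw [← hcard]
  refine card_le_card_of_injOn (fun a => Finsupp.equivFunOnFinite.symm (a - 2)) ?_ ?_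
  · intro a ha
    simp only [coe_filter, Nat.mem_antidiagonalTuple, Set.mem_ofPred_eq] at ha
    simp only [mem_coe, mem_finsuppAntidiag, Finsupp.coe_equivFunOnFinite_symm, subset_univ,
      and_true, Pi.sub_apply, Pi.ofNat_apply]
    rw [sum_tsub_distrib _ (fun ν _ => ha.2 ν), ha.1, sum_const, Finset.card_fin, smul_eq_mul,
      mul_comm]
  · intro a ha b hb hab
    simp only [coe_filter, Nat.mem_antidiagonalTuple, Set.mem_ofPred_eq] at ha hb
    funext ν
    have hν := congrArg (· ν) hab
    simp only [Finsupp.coe_equivFunOnFinite_symm, Pi.sub_apply, Pi.ofNat_apply] at hν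
    have := ha.2 ν
    have := hb.2 ν
    omega

lemma multichoose_sub_two_mul_eq_choose {l n : ℕ} (hl : 1 ≤ l) (hln : 2 * l ≤ n) :
    l.multichoose (n - 2 * l) = (n - l - 1).choose (l - 1) := by
  rw [multichoose_eq, ← choose_symm (by omega)]
  congr 1 <;> omega

lemma centralBinom_sq_mul_two_mul_add_one_le (n : ℕ) :
    centralBinom n ^ 2 * (2 * n + 1) ≤ 16 ^ n := by
  induction n with
  | zero => simp
  | succ n ih =>
    have hrec := succ_mul_centralBinom_succ n
    refine le_of_mul_le_mul_left ?_ (by positivity : 0 < (n + 1) ^ 2)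
    calc (n + 1) ^ 2 * (centralBinom (n + 1) ^ 2 * (2 * (n + 1) + 1))
        = 4 * (2 * n + 3) * (2 * n + 1) * (centralBinom n ^ 2 * (2 * n + 1)) := by
          rw [← mul_assoc, ← mul_pow, hrec]; ring
      _ ≤ 4 * (2 * n + 3) * (2 * n + 1) * 16 ^ n := Nat.mul_le_mul_left _ ih
      _ ≤ 16 * (n + 1) ^ 2 * 16 ^ n := Nat.mul_le_mul_right _ (by nlinarith)
      _ = (n + 1) ^ 2 * 16 ^ (n + 1) := by ring

lemma centralBinom_le_four_pow_div_sqrt (n : ℕ) :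
    (centralBinom n : ℝ) ≤ 4 ^ n / √(2 * n + 1) := by
  rw [le_div_iff₀ (by positivity)]
  have h : ((centralBinom n : ℝ) * √(2 * n + 1)) ^ 2 ≤ (4 ^ n) ^ 2 := by
    rw [mul_pow, sq_sqrt (by positivity), ← pow_mul, mul_comm n, pow_mul]
    exact_mod_cast centralBinom_sq_mul_two_mul_add_one_le n
  exact le_of_sq_le_sq h (by positivity)

lemma Ulk_le (k l : ℕ) (hl : 1 ≤ l) (hlk : l ≤ k) :
    Ulk k l ≤ exp 1 ^ (2 * k) * (2 * k)! * (2 * k - l - 1).choose (l - 1) := by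
  set S := (Nat.antidiagonalTuple l (2 * k)).filter (fun a => ∀ ν, 2 ≤ a ν)
  have hterm : ∀ a ∈ S, ((2 * k)! / ∏ ν, ((a ν)! : ℝ)) * ∏ ν, (a ν : ℝ) ^ a ν ≤
      exp 1 ^ (2 * k) * (2 * k)! := by
    intro a ha
    have hsum : ∑ ν, a ν = 2 * k := Nat.mem_antidiagonalTuple.1 (mem_filter.1 ha).1
    simpa only [hsum] using factorial_div_prod_factorial_mul_prod_pow_self_le a
  have hcard : #S ≤ (2 * k - l - 1).choose (l - 1) :=
    (card_filter_two_le_antidiagonalTuple_le_multichoose l (2 * k)).trans_eq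
      (multichoose_sub_two_mul_eq_choose hl (by omega))
  calc Ulk k l ≤ ∑ _ ∈ S, exp 1 ^ (2 * k) * (2 * k)! := sum_le_sum hterm
    _ = #S * (exp 1 ^ (2 * k) * (2 * k)!) := by rw [sum_const, nsmul_eq_mul]
    _ ≤ (2 * k - l - 1).choose (l - 1) * (exp 1 ^ (2 * k) * (2 * k)!) := by gcongr
    _ = exp 1 ^ (2 * k) * (2 * k)! * (2 * k - l - 1).choose (l - 1) := mul_comm _ _

/-- **Bound on the multinomial sum `U^l_{2k}`** (used in the proof of Proposition 3.2
of the paper).  For `k ≥ 1` and `1 ≤ l ≤ k`: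
`U^l_{2k} ≤ e^{2k} (2k)! C(2k−l−1, l−1)`, with `C(2k−l−1, l−1) ≤ C(2k,k) ≤ 2^{2k}/√k`,
so that `U^l_{2k} ≤ (1/√k) (2e)^{2k} (2k)!`. -/
theorem stmt19 (k l : ℕ) (hk : 1 ≤ k) (hl1 : 1 ≤ l) (hlk : l ≤ k) :
    Ulk k l ≤ Real.exp 1 ^ (2 * k) * ((2 * k).factorial : ℝ) *
        (Nat.choose (2 * k - l - 1) (l - 1) : ℝ) ∧
    Nat.choose (2 * k - l - 1) (l - 1) ≤ Nat.choose (2 * k) k ∧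
    ((Nat.choose (2 * k) k : ℕ) : ℝ) ≤ 2 ^ (2 * k) / Real.sqrt k ∧
    Ulk k l ≤ (1 / Real.sqrt k) * (2 * Real.exp 1) ^ (2 * k) * ((2 * k).factorial : ℝ) := by
  have hU := Ulk_le k l hl1 hlk
  have hchoose : (2 * k - l - 1).choose (l - 1) ≤ (2 * k).choose k :=
    (choose_le_choose _ (by omega)).trans (choose_le_centralBinom _ k)
  have hcentral : ((2 * k).choose k : ℝ) ≤ 2 ^ (2 * k) / √k := by
    have hk' : (0 : ℝ) < √k := sqrt_pos.2 (by exact_mod_cast hk)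
    calc ((2 * k).choose k : ℝ) = centralBinom k := by rw [centralBinom_eq_two_mul_choose]
      _ ≤ 4 ^ k / √(2 * k + 1) := centralBinom_le_four_pow_div_sqrt k
      _ ≤ 4 ^ k / √k := by gcongr; linarith
      _ = 2 ^ (2 * k) / √k := by rw [pow_mul]; norm_num
  refine ⟨hU, hchoose, hcentral, ?_⟩
  calc Ulk k l ≤ exp 1 ^ (2 * k) * (2 * k)! * (2 * k).choose k := hU.trans (by gcongr)
    _ ≤ exp 1 ^ (2 * k) * (2 * k)! * (2 ^ (2 * k) / √k) := by gcongr
    _ = 1 / √k * (2 * exp 1) ^ (2 * k) * (2 * k)! := by ring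
end
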